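/- arXiv:2409.14874 — 2 statements merged into one kernel-verified Lean document; each statement's English description precedes it below -/
import Mathlib

section
/- Suppose τ is relatively accurate with respect to ground truth y and metric π, and suppose π satisfies: π(s, t) = 1 if and only if s = t, and π(s, t) < 1 otherwise. If for a fixed image x the function ŷ ↦ τ(ŷ, x) attains its maximum over all segmentations at ŷ*, then ŷ* = y(x). -/
theorem relative_accurate_maximizer_is_ground_truth
    {X S : Type*} [Fintype S] [Nonempty S]
    (y : X → S) (π : S → S → ℝ) (τ : S → X → ℝ)
    (hle : ∀ s t : S, π s t ≤ 1)
    (heq : ∀ s t : S, π s t = 1 ↔ s = t)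
    (hrel : ∀ (x₁ x₂ : X) (yh₁ yh₂ : S), π yh₁ (y x₁) ≠ π yh₂ (y x₂) →
      (τ yh₁ x₁ - τ yh₂ x₂) * (π yh₁ (y x₁) - π yh₂ (y x₂)) > 0)
    (x : X) (yhstar : S) (hmax : ∀ yh : S, τ yh x ≤ τ yhstar x) :
    yhstar = y x := by
  by_contra h
  have h1 : π (y x) (y x) = 1 := (heq _ _).mpr rfl
  have h2 : π yhstar (y x) < 1 :=
    lt_of_le_of_ne (hle _ _) (fun he => h ((heq _ _).mp he))
  have hne : π (y x) (y x) ≠ π yhstar (y x) := by rw [h1]; exact (ne_of_lt h2).symm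
  have := hrel x x (y x) yhstar hne
  have hpos : π (y x) (y x) - π yhstar (y x) > 0 := by rw [h1]; linarith
  nlinarith [hmax (y x)]
end

section
/- Suppose τ is β-relatively accurate for some β ≥ 0. If ŷ* maximizes ŷ ↦ τ(ŷ, x) over all segmentations of image x (S finite nonempty), then π(ŷ*, y(x)) > sup over ŷ of π(ŷ, y(x)) minus β; i.e., the τ-maximizer is within β of the best achievable metric value. -/
theorem beta_relative_accurate_maximizer_near_optimal
    {X S : Type*} [Fintype S] [Nonempty S]
    (y : X → S) (π : S → S → ℝ) (τ : S → X → ℝ) (β : ℝ) (hβ : 0 ≤ β)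
    (hrel : ∀ (x₁ x₂ : X) (yh₁ yh₂ : S),
      |π yh₁ (y x₁) - π yh₂ (y x₂)| ≥ β →
        (τ yh₁ x₁ - τ yh₂ x₂) * (π yh₁ (y x₁) - π yh₂ (y x₂)) > 0)
    (x : X) (yhstar : S) (hmax : ∀ yh : S, τ yh x ≤ τ yhstar x) :
    π yhstar (y x) >
      Finset.univ.sup' Finset.univ_nonempty (fun yh : S => π yh (y x)) - β := by
  by_contra h
  push_neg at h
  obtain ⟨yh, -, hyh⟩ := Finset.exists_mem_eq_sup' (Finset.univ_nonempty (α := S))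
    (fun yh : S => π yh (y x))
  rw [hyh] at h
  have hdiff : π yh (y x) - π yhstar (y x) ≥ β := by linarith
  have habs : |π yh (y x) - π yhstar (y x)| ≥ β := le_trans hdiff (le_abs_self _)
  have := hrel x x yh yhstar habs
  nlinarith [hmax yh]
end
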